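/- arXiv:2206.07145 — 6 statements merged into one kernel-verified Lean document; each statement's English description precedes it below -/
import Mathlib

section
/- Let p be an odd prime with p ≡ 5 (mod 8), and let a be a nonzero quadratic residue modulo p such that a^((p-1)/4) ≡ -1 (mod p). Then x = 2a·(4a)^((p-5)/8) satisfies x^2 ≡ a (mod p). -/
theorem square_root_p_five_mod_eight_case_neg (p : ℕ) (hp : p.Prime) (hp5 : p % 8 = 5)
    (a : ZMod p) (ha : a ≠ 0) (hQR : a ^ ((p - 1) / 2) = 1)
    (hcase : a ^ ((p - 1) / 4) = -1) :
    (2 * a * (4 * a) ^ ((p - 5) / 8)) ^ 2 = a := by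
  haveI : Fact p.Prime := ⟨hp⟩
  have hp5' : 5 ≤ p := by
    rcases Nat.lt_or_ge p 5 with h | h
    · interval_cases p <;> omega
    · exact h
  obtain ⟨k, hk⟩ : ∃ k, p = 8 * k + 5 := ⟨p / 8, by omega⟩
  have h2ne : (2 : ZMod p) ≠ 0 := by
    have : ((2 : ℕ) : ZMod p) ≠ 0 := by
      rw [Ne, ZMod.natCast_eq_zero_iff]
      intro h
      have := Nat.le_of_dvd (by norm_num) h
      omega
    simpa using this
  have hns : ¬ IsSquare (2 : ZMod p) := by
    rw [ZMod.exists_sq_eq_two_iff (by omega : p ≠ 2)]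
    omega
  have h2 : (2 : ZMod p) ^ (p / 2) = -1 := by
    have hsq : ((2 : ZMod p) ^ (p / 2)) * ((2 : ZMod p) ^ (p / 2)) = 1 := by
      rw [← pow_add]
      have : p / 2 + p / 2 = p - 1 := by omega
      rw [this, ZMod.pow_card_sub_one_eq_one h2ne]
    rcases mul_self_eq_one_iff.mp hsq with h | h
    · exact absurd ((ZMod.euler_criterion p h2ne).mpr h) hns
    · exact h
  have h2' : (2 : ZMod p) ^ (4 * k + 2) = -1 := by
    have : p / 2 = 4 * k + 2 := by omega
    rwa [this] at h2
  have hcase' : a ^ (2 * k + 1) = -1 := by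
    have : (p - 1) / 4 = 2 * k + 1 := by omega
    rwa [this] at hcase
  have e1 : (p - 5) / 8 = k := by omega
  rw [e1]
  have h4 : (4 : ZMod p) ^ (2 * k + 1) = -1 := by
    have : ((4 : ZMod p)) ^ (2 * k + 1) = (2 : ZMod p) ^ (4 * k + 2) := by
      have : (4 : ZMod p) = 2 ^ 2 := by norm_num
      rw [this, ← pow_mul]
      ring_nf
    rw [this, h2']
  calc (2 * a * (4 * a) ^ k) ^ 2
      = (4 : ZMod p) ^ (2 * k + 1) * (a ^ (2 * k + 1) * a) := by ring
    _ = a := by rw [h4, hcase']; ring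
end

section
/- Let p be an odd prime and a ∈ F_p* a quadratic residue. Write p - 1 = 2^e · m with m odd. Let n ∈ F_p* be a quadratic non-residue, set z = n^m and b = a^m. Then there exists an even integer r ≥ 0 with b = z^r, and x = a^((m+1)/2) · z^(-r/2) satisfies x^2 = a in F_p. -/
/-!
Since `n` is a non-residue, `z = n ^ m` satisfies `z ^ 2 ^ (e - 1) = -1`, so it is a primitive
`2 ^ e`-th root of unity; as `a` is a residue, `b = a ^ m` is a `2 ^ (e - 1)`-th root of unity.
In a domain every `2 ^ e`-th root of unity is a power `z ^ r`, and `b ^ 2 ^ (e - 1) = 1` forces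
`r` to be even. Then `x ^ 2 = a ^ (m + 1) * z⁻ʳ = a * b * b⁻¹ = a`.
-/

theorem isPrimitiveRoot_two_pow_succ_of_pow_eq_neg_one {R : Type*} [CommRing R] {z : R} {k : ℕ}
    (hR : (-1 : R) ≠ 1) (hz : z ^ 2 ^ k = -1) : IsPrimitiveRoot z (2 ^ (k + 1)) := by
  refine IsPrimitiveRoot.iff_orderOf.mpr (orderOf_eq_prime_pow (by rwa [hz]) ?_)
  rw [pow_succ, pow_mul, hz, neg_one_sq]

theorem exists_even_pow_eq_of_isPrimitiveRoot {R : Type*} [CommRing R] [IsDomain R] {z b : R}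
    {k : ℕ} (hz : IsPrimitiveRoot z (2 ^ (k + 1))) (hb : b ^ 2 ^ k = 1) :
    ∃ r, Even r ∧ b = z ^ r := by
  obtain ⟨r, -, rfl⟩ := hz.eq_pow_of_pow_eq_one (by rw [pow_succ, pow_mul, hb, one_pow])
  refine ⟨r, ?_, rfl⟩
  rw [← pow_mul, hz.pow_eq_one_iff_dvd, pow_succ, mul_comm r] at hb
  exact even_iff_two_dvd.mpr (Nat.dvd_of_mul_dvd_mul_left (by positivity) hb)

theorem sq_pow_succ_div_two_mul_inv_pow_div_two {K : Type*} [Field K] {a z : K} {m r : ℕ}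
    (ha : a ≠ 0) (hm : Odd m) (hr : Even r) (h : a ^ m = z ^ r) :
    (a ^ ((m + 1) / 2) * (z ^ (r / 2))⁻¹) ^ 2 = a :=
  calc (a ^ ((m + 1) / 2) * (z ^ (r / 2))⁻¹) ^ 2
      = a * a ^ m * (z ^ r)⁻¹ := by
        rw [mul_pow, ← pow_mul, inv_pow, ← pow_mul, Nat.div_mul_cancel hm.add_one.two_dvd,
          Nat.div_mul_cancel hr.two_dvd, pow_succ']
    _ = a := by rw [← h, mul_inv_cancel_right₀ (pow_ne_zero m ha)]

theorem tonelli_shanks_correct (p : ℕ) (hp : p.Prime) (hodd : p % 2 = 1)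
    (e m : ℕ) (hm : Odd m) (hem : p - 1 = 2 ^ e * m)
    (a : ZMod p) (ha : a ≠ 0) (hQR : a ^ ((p - 1) / 2) = 1)
    (n : ZMod p) (hn : n ^ ((p - 1) / 2) = -1) :
    ∃ r : ℕ, Even r ∧ a ^ m = (n ^ m) ^ r ∧
      (a ^ ((m + 1) / 2) * ((n ^ m) ^ (r / 2))⁻¹) ^ 2 = a := by
  have : Fact p.Prime := ⟨hp⟩
  have : Fact (2 < p) := ⟨by have := hp.two_le; omega⟩
  obtain ⟨k, rfl⟩ : ∃ k, e = k + 1 := Nat.exists_eq_add_one.mpr <| Nat.pos_of_ne_zero fun he => by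
    obtain ⟨t, ht⟩ : Odd (p - 1) := by rwa [hem, he, pow_zero, one_mul]
    omega
  have hhalf : (p - 1) / 2 = m * 2 ^ k := by
    rw [hem, pow_succ, mul_right_comm, Nat.mul_div_cancel _ two_pos, mul_comm]
  have hz : IsPrimitiveRoot (n ^ m) (2 ^ (k + 1)) :=
    isPrimitiveRoot_two_pow_succ_of_pow_eq_neg_one ZMod.neg_one_ne_one
      (by rw [← pow_mul, ← hhalf, hn])
  obtain ⟨r, hr, hb⟩ :=
    exists_even_pow_eq_of_isPrimitiveRoot hz (by rw [← pow_mul, ← hhalf, hQR])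
  exact ⟨r, hr, hb, sq_pow_succ_div_two_mul_inv_pow_div_two ha hm hr hb⟩
end

section
/- Let p be an odd prime, a a nonzero quadratic residue mod p, and t ∈ F_p such that u = t^2 - a is a quadratic non-residue mod p. Let w be a square root of u in F_{p^2}. Then b = (t + w)^((p+1)/2) lies in F_p and b^2 = a. -/
open Polynomial in
lemma fixed_mem_range (p : ℕ) (hp : p.Prime) (F : Type*) [Field F]
    [Algebra (ZMod p) F] (x : F) (hx : x ^ p = x) :
    ∃ c : ZMod p, algebraMap (ZMod p) F c = x := by
  have : Fact p.Prime := ⟨hp⟩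
  set f := algebraMap (ZMod p) F
  have hfinj : Function.Injective f := (f : ZMod p →+* F).injective
  classical
  have hne : (X ^ p - X : F[X]) ≠ 0 :=
    FiniteField.X_pow_card_sub_X_ne_zero F hp.one_lt
  have hroot : ∀ c : ZMod p, IsRoot (X ^ p - X : F[X]) (f c) := by
    intro c
    simp [IsRoot, ← map_pow, ZMod.pow_card]
  have hsub : (Finset.univ.image f) ⊆ (X ^ p - X : F[X]).roots.toFinset := by
    intro y hy
    obtain ⟨c, -, rfl⟩ := Finset.mem_image.mp hy
    simpa [Multiset.mem_toFinset, mem_roots hne] using hroot c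
  have hcard1 : (Finset.univ.image f).card = p := by
    rw [Finset.card_image_of_injective _ hfinj, Finset.card_univ, ZMod.card]
  have hdeg : (X ^ p - X : F[X]).natDegree = p :=
    FiniteField.X_pow_card_sub_X_natDegree_eq F hp.one_lt
  have hcard2 : (X ^ p - X : F[X]).roots.toFinset.card ≤ p :=
    le_trans (Multiset.toFinset_card_le _) (le_trans (card_roots' _) (le_of_eq hdeg))
  have heq : (Finset.univ.image f) = (X ^ p - X : F[X]).roots.toFinset :=
    Finset.eq_of_subset_of_card_le hsub (by rw [hcard1]; exact hcard2)
  have hxmem : x ∈ (X ^ p - X : F[X]).roots.toFinset := by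
    simp [Multiset.mem_toFinset, mem_roots hne, IsRoot, hx]
  rw [← heq] at hxmem
  obtain ⟨c, -, hc⟩ := Finset.mem_image.mp hxmem
  exact ⟨c, hc⟩

theorem cipolla_correct (p : ℕ) (hp : p.Prime) (hodd : p % 2 = 1)
    (F : Type*) [Field F] [Algebra (ZMod p) F]
    (a t : ZMod p) (ha : a ≠ 0) (hQR : a ^ ((p - 1) / 2) = 1)
    (hu : (t ^ 2 - a) ^ ((p - 1) / 2) = -1)
    (w : F) (hw : w ^ 2 = algebraMap (ZMod p) F (t ^ 2 - a)) :
    (∃ c : ZMod p, algebraMap (ZMod p) F c = (algebraMap (ZMod p) F t + w) ^ ((p + 1) / 2)) ∧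
      ((algebraMap (ZMod p) F t + w) ^ ((p + 1) / 2)) ^ 2 = algebraMap (ZMod p) F a := by
  have hfact : Fact p.Prime := ⟨hp⟩
  set f := algebraMap (ZMod p) F with hf
  have hfinj : Function.Injective f := (f : ZMod p →+* F).injective
  have hchar : CharP F p := charP_of_injective_algebraMap hfinj p
  have hp2 : 2 ≤ p := hp.two_le
  have hpodd : p = 2 * ((p - 1) / 2) + 1 := by omega
  have hpeven : 2 * ((p + 1) / 2) = p + 1 := by omega
  set α : F := f t + w with hα
  -- w^p = -w
  have hwp : w ^ p = -w := by
    calc w ^ p = (w ^ 2) ^ ((p - 1) / 2) * w := by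
          rw [← pow_mul, ← pow_succ]; congr 1
      _ = f ((t ^ 2 - a) ^ ((p - 1) / 2)) * w := by rw [hw, map_pow]
      _ = -w := by rw [hu, map_neg, map_one, neg_one_mul]
  -- Frobenius
  have hfrob : α ^ p = f t - w := by
    rw [hα, add_pow_char, hwp, ← map_pow, ZMod.pow_card, sub_eq_add_neg]
  have hb2 : α ^ (p + 1) = f a := by
    have hr : (f t - w) * (f t + w) = f t ^ 2 - w ^ 2 := by ring
    rw [pow_succ, hfrob, hα, hr, hw, ← map_pow, ← map_sub]
    congr 1
    ring
  have key2 : (α ^ ((p + 1) / 2)) ^ 2 = f a := by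
    rw [← pow_mul, mul_comm, hpeven, hb2]
  refine ⟨?_, key2⟩
  set b : F := α ^ ((p + 1) / 2) with hbdef
  have hbne : b ≠ 0 := by
    intro h
    rw [h] at key2
    simp at key2
    exact ha (hfinj (by simpa using key2.symm))
  have hbp : b ^ p = b := by
    have h1 : b ^ p * b = b ^ 2 := by
      calc b ^ p * b = (α ^ p) ^ ((p + 1) / 2) * α ^ ((p + 1) / 2) := by
            rw [hbdef, ← pow_mul, ← pow_mul, mul_comm ((p+1)/2) p]
        _ = (α ^ p * α) ^ ((p + 1) / 2) := by rw [mul_pow]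
        _ = (f a) ^ ((p + 1) / 2) := by rw [← pow_succ, hb2]
        _ = f (a ^ ((p + 1) / 2)) := by rw [map_pow]
        _ = f (a * a ^ ((p - 1) / 2)) := by
            congr 1
            rw [← pow_succ']
            congr 1
            omega
        _ = f a := by rw [hQR, mul_one]
        _ = b ^ 2 := key2.symm
    have h2 : b ^ p * b = b * b := by rw [h1, sq]
    exact mul_right_cancel₀ hbne h2
  exact fixed_mem_range p hp F b hbp
end

section
/- Let p be an odd prime, a ∈ F_p* a quadratic residue, and r ∈ F_p with r^2 ≠ a. In the ring R = F_p[y]/(y^2 - a), write (r + y)^((p-1)/2) = u + v·y with u, v ∈ F_p. Then 2uv = 0, i.e., u = 0 or v = 0. -/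
open Polynomial

theorem peralta_uv_zero (p : ℕ) (hp : p.Prime) (hodd : p % 2 = 1)
    (a : ZMod p) (ha : a ≠ 0) (hQR : a ^ ((p - 1) / 2) = 1)
    (r : ZMod p) (hr : r ^ 2 ≠ a) (u v : ZMod p)
    (h : (AdjoinRoot.of (X ^ 2 - C a) r + AdjoinRoot.root (X ^ 2 - C a)) ^ ((p - 1) / 2) =
        AdjoinRoot.of (X ^ 2 - C a) u +
          AdjoinRoot.of (X ^ 2 - C a) v * AdjoinRoot.root (X ^ 2 - C a)) :
    2 * u * v = 0 ∧ (u = 0 ∨ v = 0) := by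
  haveI : Fact p.Prime := ⟨hp⟩
  set f : (ZMod p)[X] := X ^ 2 - C a with hf
  set t := AdjoinRoot.root f with ht
  set φ := AdjoinRoot.of f with hφ
  have hp2 : p ≠ 2 := by rintro rfl; simp at hodd
  have hmonic : f.Monic := by
    apply monic_X_pow_sub_C a (by norm_num)
  have hdeg : f.natDegree = 2 := by
    rw [hf]; compute_degree!
  have hdeg' : f.degree = 2 := by
    rw [degree_eq_natDegree hmonic.ne_zero, hdeg]; rfl
  haveI hnt : Nontrivial (AdjoinRoot f) := AdjoinRoot.nontrivial f (by rw [hdeg']; norm_num)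
  haveI hchar : CharP (AdjoinRoot f) p :=
    charP_of_injective_ringHom (AdjoinRoot.of f).injective p
  have hroot : t ^ 2 = φ a := by
    have := AdjoinRoot.mk_self (f := f)
    rw [hf, map_sub, map_pow, AdjoinRoot.mk_X, AdjoinRoot.mk_C, sub_eq_zero] at this
    exact this
  -- p = 2 * ((p-1)/2) + 1
  have hpodd : p = 2 * ((p - 1) / 2) + 1 := by omega
  have htp : t ^ p = t := by
    have h1 : t ^ (2 * ((p - 1) / 2) + 1) = t := by
      rw [pow_succ, pow_mul, hroot, ← map_pow, hQR, map_one, one_mul]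
    rw [← hpodd] at h1
    exact h1
  have hxp : (φ r + t) ^ p = φ r + t := by
    rw [add_pow_char, ← map_pow, ZMod.pow_card, htp]
  have hunit : IsUnit (φ r + t) := by
    have hmul : (φ r + t) * (φ r - t) = φ (r ^ 2 - a) := by
      ring_nf
      rw [hroot]
      push_cast [map_sub, map_pow]
      ring
    have : IsUnit (φ (r ^ 2 - a)) := by
      apply IsUnit.map
      exact (sub_ne_zero.mpr hr).isUnit
    exact isUnit_of_mul_isUnit_left (hmul ▸ this)
  have hx1 : (φ r + t) ^ (p - 1) = 1 := by
    have h1 : (φ r + t) ^ (p - 1) * (φ r + t) = 1 * (φ r + t) := by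
      rw [one_mul, ← pow_succ]
      have : p - 1 + 1 = p := by omega
      rw [this, hxp]
    exact hunit.mul_right_cancel h1
  have hw2 : (φ u + φ v * t) ^ 2 = 1 := by
    rw [← h, ← pow_mul]
    have : (p - 1) / 2 * 2 = p - 1 := by omega
    rw [this, hx1]
  have hexp : φ (u ^ 2 + a * v ^ 2) + φ (2 * u * v) * t = φ 1 + φ 0 * t := by
    rw [map_one, map_zero, zero_mul, add_zero]
    rw [← hw2]; push_cast [map_add, map_mul, map_pow, map_ofNat]
    ring_nf
    rw [hroot]
    ring
  -- uniqueness of representation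
  have key : ∀ c d : ZMod p, φ c + φ d * t = 0 → c = 0 ∧ d = 0 := by
    intro c d hcd
    have : AdjoinRoot.mk f (C c + C d * X) = 0 := by
      rw [map_add, map_mul, AdjoinRoot.mk_C, AdjoinRoot.mk_C, AdjoinRoot.mk_X]
      exact hcd
    rw [AdjoinRoot.mk_eq_zero] at this
    have hz : C c + C d * X = 0 := by
      by_contra hne
      have := Polynomial.degree_le_of_dvd this hne
      rw [hdeg'] at this
      have hlt : (C c + C d * X).degree ≤ 1 := by
        rw [add_comm]
        exact degree_linear_le
      have : (2 : WithBot ℕ) ≤ 1 := le_trans this hlt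
      norm_num at this
    constructor
    · have := congrArg (fun q => Polynomial.coeff q 0) hz
      simpa using this
    · have := congrArg (fun q => Polynomial.coeff q 1) hz
      simpa using this
  have hkey := key (u ^ 2 + a * v ^ 2 - 1) (2 * u * v) (by
    rw [map_sub, map_one]
    have := sub_eq_zero.mpr hexp
    rw [map_one, map_zero, zero_mul, add_zero] at hexp
    linear_combination hexp)
  refine ⟨hkey.2, ?_⟩
  have h2 : (2 : ZMod p) ≠ 0 := by
    have : ((2 : ℕ) : ZMod p) ≠ 0 := by
      rw [Ne, ZMod.natCast_eq_zero_iff]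
      intro hdvd
      exact hp2 ((Nat.prime_dvd_prime_iff_eq hp Nat.prime_two).mp hdvd)
    simpa using this
  have := hkey.2
  rcases mul_eq_zero.mp this with h' | h'
  · rcases mul_eq_zero.mp h' with h'' | h''
    · exact absurd h'' h2
    · exact Or.inl h''
  · exact Or.inr h'
end

section
/- Let p be an odd prime, a ∈ F_p* a quadratic residue, and r ∈ F_p with r^2 ≠ a. In R = F_p[y]/(y^2 - a), suppose (r + y)^((p-1)/2) = v·y for some v ∈ F_p. Then v ≠ 0 and (v^(-1))^2 = a in F_p. -/
open Polynomial

theorem peralta_correct (p : ℕ) (hp : p.Prime) (hodd : p % 2 = 1)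
    (a : ZMod p) (ha : a ≠ 0) (hQR : a ^ ((p - 1) / 2) = 1)
    (r : ZMod p) (hr : r ^ 2 ≠ a) (v : ZMod p)
    (h : (AdjoinRoot.of (X ^ 2 - C a) r + AdjoinRoot.root (X ^ 2 - C a)) ^ ((p - 1) / 2) =
        AdjoinRoot.of (X ^ 2 - C a) v * AdjoinRoot.root (X ^ 2 - C a)) :
    v ≠ 0 ∧ (v⁻¹) ^ 2 = a := by
  haveI : Fact p.Prime := ⟨hp⟩
  set f : Polynomial (ZMod p) := X ^ 2 - C a with hf
  set y := AdjoinRoot.root f with hy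
  set of := AdjoinRoot.of f with hof
  -- degree
  have hdeg : f.degree = 2 := by
    rw [hf]
    compute_degree!
  have hinj : Function.Injective of := by
    apply AdjoinRoot.of.injective_of_degree_ne_zero
    rw [hdeg]; norm_num
  -- root relation
  have hroot : y ^ 2 = of a := by
    have := AdjoinRoot.mk_self (f := f)
    rw [hf] at this
    simpa [map_sub, map_pow, AdjoinRoot.mk_X, AdjoinRoot.mk_C, sub_eq_zero] using this
  -- p = 2k+1
  set k := (p - 1) / 2 with hk
  have hpk : p = 2 * k + 1 := by
    have h1 : 1 ≤ p := hp.one_lt.le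
    omega
  -- y^p = y
  have hyp : y ^ p = y := by
    have : y ^ (2 * k + 1) = y := by
      rw [pow_succ, pow_mul, hroot, ← map_pow, hQR, map_one, one_mul]
    exact (congrArg (fun n => y ^ n) hpk).trans this
  -- unit: (r+y)*(r-y) = of (r^2 - a)
  have hunit : IsUnit (of r + y) := by
    have hmul : (of r + y) * (of r - y) = of (r ^ 2 - a) := by
      ring_nf
      rw [hroot]
      push_cast [map_sub, map_pow]
      ring
    have hne : r ^ 2 - a ≠ 0 := sub_ne_zero.mpr hr
    have : IsUnit (of (r ^ 2 - a)) := (hne.isUnit).map of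
    exact isUnit_of_mul_isUnit_left (hmul ▸ this)
  -- frobenius
  haveI : CharP (AdjoinRoot f) p := charP_of_injective_ringHom hinj p
  have hfrob : (of r + y) ^ p = of r + y := by
    rw [add_pow_char, ← map_pow, ZMod.pow_card, hyp]
  -- combine
  have hcalc : (of r + y) ^ p = of (v ^ 2 * a) * (of r + y) := by
    have : (of r + y) ^ (2 * k + 1) = of (v ^ 2 * a) * (of r + y) := by
      rw [pow_succ, pow_mul', h, mul_pow, ← map_pow, hroot, ← map_mul]
    exact (congrArg (fun n => (of r + y) ^ n) hpk).trans this
  rw [hfrob] at hcalc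
  have hva : v ^ 2 * a = 1 := by
    apply hinj
    have h1 : (1 : AdjoinRoot f) * (of r + y) = of (v ^ 2 * a) * (of r + y) := by
      rw [one_mul]; exact hcalc
    have := hunit.mul_right_cancel h1
    rw [map_one]; exact this.symm
  have hv : v ≠ 0 := by
    rintro rfl
    simp at hva
  refine ⟨hv, ?_⟩
  field_simp
  rw [← hva]
end

section
/- Let p be an odd prime, a ∈ F_p* a quadratic residue, and E: y^2 = x(x+a)^2 the singular cubic over F_p. A non-singular point P on E has order exactly 4 in the group of non-singular points if and only if P = (a, 2a·s) or P = (a, -2a·s), where s is a square root of a in F_p. -/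
/-!
On `y² = x(x + a)²` the negation is `y ↦ -y`, so away from characteristic 2 a nonsingular point
is `2`-torsion iff `y = 0`, and then `x = 0`: the other root `x = -a` is the singular point.
Hence `P` has order `4` iff `y ≠ 0` and `2P` has `x`-coordinate `0`. Clearing denominators,
`x(2P) · (2y)² = ((x + a)(x - a))²`, so this happens iff `x = a`; there `y² = 4a³ = (2as)²`.
-/

theorem addOrderOf_eq_prime_pow_iff {G : Type*} [AddMonoid G] {g : G} {p n : ℕ}
    [hp : Fact p.Prime] :
    addOrderOf g = p ^ (n + 1) ↔ p ^ n • g ≠ 0 ∧ p ^ (n + 1) • g = 0 := by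
  refine ⟨fun hg => ⟨fun hn => ?_, hg ▸ addOrderOf_nsmul_eq_zero g⟩,
    fun ⟨hn, hn1⟩ => addOrderOf_eq_prime_pow hn hn1⟩
  have := (Nat.pow_dvd_pow_iff_le_right hp.out.one_lt).mp
    (hg ▸ addOrderOf_dvd_of_nsmul_eq_zero hn)
  omega

namespace WeierstrassCurve.Affine

variable {F : Type*} [Field F] {a x y : F}

def nodalCubic (a : F) : WeierstrassCurve.Affine F := ⟨0, 2 * a, 0, a ^ 2, 0⟩

lemma nodalCubic_equation_iff : (nodalCubic a).Equation x y ↔ y ^ 2 = x * (x + a) ^ 2 := by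
  rw [equation_iff]
  simp only [nodalCubic]
  constructor <;> intro h <;> linear_combination h

lemma nodalCubic_negY : (nodalCubic a).negY x y = -y := by
  simp [negY, nodalCubic]

lemma nodalCubic_X_add_ne_zero (h : (nodalCubic a).Nonsingular x y) : x + a ≠ 0 := by
  intro hx
  obtain ⟨heq, hsing⟩ := (nonsingular_iff x y).mp h
  obtain rfl : x = -a := by linear_combination hx
  obtain rfl : y = 0 := pow_eq_zero_iff two_ne_zero |>.mp <| by
    rw [nodalCubic_equation_iff.mp heq, hx]; ring
  simp only [nodalCubic] at hsing
  rcases hsing with hc | hc <;> exact hc (by ring)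

lemma nodalCubic_Y_eq_zero_iff (h : (nodalCubic a).Nonsingular x y) : y = 0 ↔ x = 0 := by
  have heq := nodalCubic_equation_iff.mp h.1
  constructor
  · rintro rfl
    have hfac : x * (x + a) ^ 2 = 0 := by rw [← heq]; ring
    exact (mul_eq_zero.mp hfac).resolve_right (pow_ne_zero 2 (nodalCubic_X_add_ne_zero h))
  · rintro rfl
    simpa using heq

lemma nodalCubic_Y_ne_zero_of_X_eq (h : (nodalCubic a).Nonsingular a y) : y ≠ 0 := by
  intro hy
  have ha : a = 0 := (nodalCubic_Y_eq_zero_iff h).mp hy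
  exact nodalCubic_X_add_ne_zero h (by rw [ha, add_zero])

lemma nodalCubic_Y_eq_negY_iff (h2 : (2 : F) ≠ 0) : y = (nodalCubic a).negY x y ↔ y = 0 := by
  rw [nodalCubic_negY, eq_neg_iff_add_eq_zero, ← two_mul, mul_eq_zero, or_iff_right h2]

variable [DecidableEq F]

lemma nodalCubic_addX_self_mul_sq (h2 : (2 : F) ≠ 0) (h : (nodalCubic a).Equation x y)
    (hy : y ≠ 0) :
    (nodalCubic a).addX x x ((nodalCubic a).slope x x y y) * (2 * y) ^ 2
      = ((x + a) * (x - a)) ^ 2 := by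
  have hy' : y ≠ (nodalCubic a).negY x y := (nodalCubic_Y_eq_negY_iff h2).not.mpr hy
  have hslope : (nodalCubic a).slope x x y y * (2 * y) = (x + a) * (3 * x + a) := by
    rw [slope_of_Y_ne rfl hy', div_mul_eq_mul_div, div_eq_iff (sub_ne_zero.mpr hy'),
      nodalCubic_negY]
    simp only [nodalCubic]
    ring
  set ℓ := (nodalCubic a).slope x x y y
  simp only [addX, nodalCubic]
  linear_combination (ℓ * (2 * y) + (x + a) * (3 * x + a)) * hslope
    - 8 * (x + a) * nodalCubic_equation_iff.mp h

lemma nodalCubic_addX_self_eq_zero_iff (h2 : (2 : F) ≠ 0) (h : (nodalCubic a).Nonsingular x y)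
    (hy : y ≠ 0) : (nodalCubic a).addX x x ((nodalCubic a).slope x x y y) = 0 ↔ x = a := by
  rw [← mul_left_inj' (pow_ne_zero 2 (mul_ne_zero h2 hy)), zero_mul,
    nodalCubic_addX_self_mul_sq h2 h.1 hy, pow_eq_zero_iff two_ne_zero, mul_eq_zero,
    or_iff_right (nodalCubic_X_add_ne_zero h), sub_eq_zero]

namespace Point

lemma some_add_self_eq_zero_iff {W : WeierstrassCurve.Affine F} (h : W.Nonsingular x y) :
    some x y h + some x y h = 0 ↔ y = W.negY x y :=
  ⟨fun h0 => by_contra fun hy => some_ne_zero _ ((add_self_of_Y_ne hy).symm.trans h0),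
    add_self_of_Y_eq⟩

lemma nodalCubic_addOrderOf_some_eq_four_iff (h2 : (2 : F) ≠ 0)
    (h : (nodalCubic a).Nonsingular x y) : addOrderOf (some x y h) = 4 ↔ x = a := by
  rw [show 4 = 2 ^ (1 + 1) from rfl, addOrderOf_eq_prime_pow_iff, pow_one,
    show 2 ^ (1 + 1) = 2 * 2 from rfl, mul_nsmul, two_nsmul, two_nsmul, Ne,
    some_add_self_eq_zero_iff, nodalCubic_Y_eq_negY_iff h2]
  by_cases hy : y = 0
  · exact iff_of_false (fun h4 => h4.1 hy) fun hx => nodalCubic_Y_ne_zero_of_X_eq (hx ▸ h) hy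
  · have hy' : y ≠ (nodalCubic a).negY x y := (nodalCubic_Y_eq_negY_iff h2).not.mpr hy
    rw [add_self_of_Y_ne hy', some_add_self_eq_zero_iff, nodalCubic_Y_eq_negY_iff h2,
      nodalCubic_Y_eq_zero_iff (nonsingular_add h h fun hxy => hy' hxy.right),
      and_iff_right hy, nodalCubic_addX_self_eq_zero_iff h2 h hy]

end Point

end WeierstrassCurve.Affine

open WeierstrassCurve.Affine WeierstrassCurve.Affine.Point in
theorem singular_cubic_order_four_points_general (p : ℕ) [hp : Fact p.Prime] (hodd : p % 2 = 1)
    (a s : ZMod p) (hs : s ^ 2 = a)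
    (W : WeierstrassCurve.Affine (ZMod p)) (hW : W = ⟨0, 2 * a, 0, a ^ 2, 0⟩)
    (x y : ZMod p) (h : W.Nonsingular x y) :
    addOrderOf (WeierstrassCurve.Affine.Point.some x y h) = 4 ↔
      (x = a ∧ (y = 2 * a * s ∨ y = -(2 * a * s))) := by
  obtain rfl : W = nodalCubic a := hW
  have h2 : (2 : ZMod p) ≠ 0 := fun h0 => by
    have := Nat.le_of_dvd two_pos ((ZMod.natCast_eq_zero_iff 2 p).mp (by exact_mod_cast h0))
    have := hp.out.two_le
    omega
  rw [nodalCubic_addOrderOf_some_eq_four_iff h2 h, ← sq_eq_sq_iff_eq_or_eq_neg]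
  refine ⟨fun hx => ⟨hx, ?_⟩, And.left⟩
  rw [nodalCubic_equation_iff.mp h.1, hx, ← hs]
  ring

theorem singular_cubic_order_four_points (p : ℕ) [hp : Fact p.Prime] (hodd : p % 2 = 1)
    (a s : ZMod p) (ha : a ≠ 0) (hs : s ^ 2 = a)
    (W : WeierstrassCurve.Affine (ZMod p)) (hW : W = ⟨0, 2 * a, 0, a ^ 2, 0⟩)
    (x y : ZMod p) (h : W.Nonsingular x y) :
    addOrderOf (WeierstrassCurve.Affine.Point.some x y h) = 4 ↔
      (x = a ∧ (y = 2 * a * s ∨ y = -(2 * a * s))) :=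
  singular_cubic_order_four_points_general p (hp := hp) hodd a s hs W hW x y h
end
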